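/- (The parametric family f_{MLA(α_o, α_r)} satisfies the validity constraints.) For constants α_o ≥ 0 and α_r ≥ 0, define f(x,y) = y · max( 1 + α_o x + α_r y, max(1 + α_o x, 0)/2 ). Then: (i) f(x,0) = 0 for every x; (ii) for every fixed x, the map y ↦ f(x,y) is monotone nondecreasing on ℝ; (iii) y · f(x,y) ≥ 0 for all x, y; (iv) for every fixed y, the map x ↦ |f(x,y)| is monotone nondecreasing on ℝ. -/

import Mathlib

/-!
Write `a = 1 + α_o x` and `g(y) = max(a + α_r y, c)` with `c = (a)_+ / 2`, so `f = y · g(y)`.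
Since `g ≥ c ≥ 0` and `g` is nondecreasing in both variables, everything is immediate except the
monotonicity of `y ↦ y · g(y)` on `y ≤ 0`. There the quadratic branch `y (a + α_r y)` is only used
where `a + α_r y ≥ c`, and `c ≥ a / 2` places that region to the right of the vertex of the parabola.
-/

lemma max_add_mul_nonneg {a c r : ℝ} (hc : 0 ≤ c) (y : ℝ) : 0 ≤ max (a + r * y) c :=
  hc.trans (le_max_right _ _)

lemma monotone_max_add_mul {a c r : ℝ} (hr : 0 ≤ r) : Monotone fun y => max (a + r * y) c :=
  fun _ _ h => max_le_max_right c (by gcongr)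

lemma mul_max_add_mul_le_of_nonpos {a c r y₁ y₂ : ℝ} (hr : 0 ≤ r) (hc : 0 ≤ c) (hac : a ≤ 2 * c)
    (h : y₁ ≤ y₂) (hy₂ : y₂ ≤ 0) : y₁ * max (a + r * y₁) c ≤ y₂ * max (a + r * y₂) c := by
  have hu : a + r * y₁ ≤ a + r * y₂ := by gcongr
  rcases le_total (a + r * y₂) c with h₂ | h₂
  · rw [max_eq_right h₂, max_eq_right (hu.trans h₂)]
    exact mul_le_mul_of_nonneg_right h hc
  rcases le_total (a + r * y₁) c with h₁ | h₁
  · -- the gap `a + r y₂ - c` is at most `r (y₂ - y₁)`, and `c + r y₂ ≥ 2c - a ≥ 0`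
    rw [max_eq_right h₁, max_eq_left h₂]
    nlinarith [mul_nonneg (neg_nonneg.2 hy₂) (by linarith : 0 ≤ r * (y₂ - y₁) - (a + r * y₂ - c)),
      mul_nonneg (sub_nonneg.2 h) (by linarith : 0 ≤ c + r * y₂)]
  · rw [max_eq_left h₁, max_eq_left h₂]
    nlinarith [mul_nonneg (sub_nonneg.2 h) (by linarith : 0 ≤ a + r * (y₁ + y₂))]

theorem monotone_mul_max_add_mul {a c r : ℝ} (hr : 0 ≤ r) (hc : 0 ≤ c) (hac : a ≤ 2 * c) :
    Monotone fun y => y * max (a + r * y) c := by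
  intro y₁ y₂ h
  rcases le_total 0 y₁ with hy₁ | hy₁
  · exact mul_le_mul h (monotone_max_add_mul hr h) (max_add_mul_nonneg hc y₁) (hy₁.trans h)
  rcases le_total 0 y₂ with hy₂ | hy₂
  · exact (mul_nonpos_of_nonpos_of_nonneg hy₁ (max_add_mul_nonneg hc y₁)).trans
      (mul_nonneg hy₂ (max_add_mul_nonneg hc y₂))
  · exact mul_max_add_mul_le_of_nonpos hr hc hac h hy₂

lemma Monotone.abs_const_mul {α : Type*} [Preorder α] {g : α → ℝ} (hg : Monotone g)
    (hg₀ : ∀ x, 0 ≤ g x) (y : ℝ) : Monotone fun x => |y * g x| := by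
  intro x₁ x₂ h
  simp only [abs_mul, abs_of_nonneg (hg₀ _)]
  exact mul_le_mul_of_nonneg_left (hg h) (abs_nonneg y)

/-- The parametric family `f_{MLA(α_o, α_r)}(x,y) = y · max(1 + α_o x + α_r y,
(1 + α_o x)_+ / 2)` satisfies all the validity constraints when `α_o, α_r ≥ 0`. -/
theorem fMLA_param_valid (αo αr : ℝ) (hαo : 0 ≤ αo) (hαr : 0 ≤ αr)
    (f : ℝ → ℝ → ℝ)
    (hf : ∀ x y : ℝ,
      f x y = y * max (1 + αo * x + αr * y) (max (1 + αo * x) 0 / 2)) :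
    (∀ x : ℝ, f x 0 = 0) ∧
    (∀ x : ℝ, Monotone fun y => f x y) ∧
    (∀ x y : ℝ, 0 ≤ y * f x y) ∧
    (∀ y : ℝ, Monotone fun x => |f x y|) := by
  have hc : ∀ x, 0 ≤ max (1 + αo * x) 0 / 2 := fun x => by positivity
  have hg : ∀ x y, 0 ≤ max (1 + αo * x + αr * y) (max (1 + αo * x) 0 / 2) :=
    fun x => max_add_mul_nonneg (hc x)
  refine ⟨fun x => by simp [hf], fun x => ?_, fun x y => ?_, fun y => ?_⟩
  · simpa only [hf] using monotone_mul_max_add_mul hαr (hc x)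
      (by linarith [le_max_left (1 + αo * x) 0])
  · rw [hf, ← mul_assoc]
    exact mul_nonneg (mul_self_nonneg y) (hg x y)
  · have hmax : Monotone fun x => max (1 + αo * x + αr * y) (max (1 + αo * x) 0 / 2) :=
      fun x₁ x₂ h => by dsimp only; gcongr
    simpa only [hf] using hmax.abs_const_mul (fun x => hg x y) y
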